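/- Fix a fusion rule f : V_1 × ⋯ × V_n → Bool. Suppose σ_f ∈ Σ satisfies σ_f ∉ Σ_io for every i and σ_f does not occur in any string of L. Let L' = (L \ K) ∪ { s ++ [σ_f] | s ∈ K }. Then there exist observers f_1,…,f_n (with f_i : Σ* → V_i) such that (f_1,…,f_n) together with f solve the observation problem Obs(f, L, K, (Σ_io)) if and only if there exist observers g_1,…,g_n such that (g_1,…,g_n) together with f solve the diagnosis problem Dx(f, L', (Σ_io), σ_f, 0). (Solvability equivalence of f-observation and f-diagnosis problems, Theorem 3.) -/

import Mathlib

open List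

/-- Natural projection onto a subalphabet: keep only symbols in `A`. -/
def natProj {α : Type*} (A : Set α) [DecidablePred (· ∈ A)] (s : List α) : List α :=
  s.filter (fun a => decide (a ∈ A))

/-- Observers `obs` together with fusion rule `f` solve the observation problem
`Obs(f, L, K, (Sio i))`. -/
def SolvesObs {α : Type*} {n : ℕ} {V : Fin n → Type*} (f : (∀ i, V i) → Bool)
    (obs : ∀ i, List α → V i) (L K : Set (List α))
    (Sio : Fin n → Set α) [∀ i, DecidablePred (· ∈ Sio i)] : Prop :=
  ∀ s ∈ L,
    (s ∈ K → f (fun i => obs i (natProj (Sio i) s)) = true) ∧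
    (s ∈ L \ K → f (fun i => obs i (natProj (Sio i) s)) = false)

/-- `s` is positive (contains the fault event `σf`) for at least `m` steps. -/
def PosSteps {α : Type*} (σf : α) (m : ℕ) (s : List α) : Prop :=
  ∃ π τ : List α, s = π ++ [σf] ++ τ ∧ m ≤ τ.length

/-- Observers `obs` together with fusion rule `f` solve the diagnosis problem
`Dx(f, L, (Sio i), σf, m)`. -/
def SolvesDx {α : Type*} {n : ℕ} {V : Fin n → Type*} (f : (∀ i, V i) → Bool)
    (obs : ∀ i, List α → V i) (L : Set (List α))
    (Sio : Fin n → Set α) [∀ i, DecidablePred (· ∈ Sio i)]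
    (σf : α) (m : ℕ) : Prop :=
  ∀ s ∈ L,
    (PosSteps σf m s → f (fun i => obs i (natProj (Sio i) s)) = true) ∧
    (σf ∉ s → f (fun i => obs i (natProj (Sio i) s)) = false)

/-- Controllers `con σ` together with fusion rules `fus σ`, for `σ ∈ Sc`, solve the
control problem `Con(L, K, (Sio i), Sc)`. -/
def SolvesCon {α : Type*} {n : ℕ} {V : Fin n → Type*} (fus : α → (∀ i, V i) → Bool)
    (con : α → ∀ i, List α → V i) (L K : Set (List α))
    (Sio : Fin n → Set α) [∀ i, DecidablePred (· ∈ Sio i)] (Sc : Set α) : Prop :=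
  ∀ σ ∈ Sc, ∀ s ∈ K,
    (s ++ [σ] ∈ K → fus σ (fun i => con σ i (natProj (Sio i) s)) = true) ∧
    (s ++ [σ] ∈ L \ K → fus σ (fun i => con σ i (natProj (Sio i) s)) = false)

/-- Prefix closure of a language. -/
def pr {α : Type*} (M : Set (List α)) : Set (List α) := {s | ∃ t ∈ M, s <+: t}

/-- `Mγ`: every string of `M` extended by the symbol `γ`. -/
def catSym {α : Type*} (M : Set (List α)) (γ : α) : Set (List α) :=
  {t | ∃ s ∈ M, t = s ++ [γ]}

/-
The same observers work in both directions. Appending the unobservable fault `σf`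
does not change any projection, so the verdict on `s ++ [σf]` equals the verdict on `s`. Since no
string of `L` contains `σf`, the positive strings of `L'` are exactly the `s ++ [σf]` with `s ∈ K`
and its negative strings are exactly `L \ K`; hence "verdict = [s ∈ K] on `L`" and
"verdict = [σf ∈ s] on `L'`" are the same requirement.
-/

theorem natProj_append_singleton_of_not_mem {α : Type*} {A : Set α} [DecidablePred (· ∈ A)]
    {σ : α} (hσ : σ ∉ A) (s : List α) : natProj A (s ++ [σ]) = natProj A s := by
  simp [natProj, List.filter_append, hσ]

theorem posSteps_zero_iff {α : Type*} {σ : α} {s : List α} : PosSteps σ 0 s ↔ σ ∈ s := by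
  constructor
  · rintro ⟨π, τ, rfl, -⟩
    simp
  · intro hσ
    obtain ⟨π, τ, rfl⟩ := List.append_of_mem hσ
    exact ⟨π, τ, by simp, Nat.zero_le _⟩

section Verdict

variable {α : Type*} {n : ℕ} {V : Fin n → Type*} (f : (∀ i, V i) → Bool)
  (obs : ∀ i, List α → V i) (Sio : Fin n → Set α) [∀ i, DecidablePred (· ∈ Sio i)]

theorem solvesObs_iff {L K : Set (List α)} :
    SolvesObs f obs L K Sio ↔
      ∀ s ∈ L, f (fun i => obs i (natProj (Sio i) s)) = true ↔ s ∈ K := by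
  refine forall₂_congr fun s hsL => ?_
  by_cases hsK : s ∈ K <;> simp [hsK, hsL]

theorem solvesDx_zero_iff {L : Set (List α)} {σf : α} :
    SolvesDx f obs L Sio σf 0 ↔
      ∀ s ∈ L, f (fun i => obs i (natProj (Sio i) s)) = true ↔ σf ∈ s := by
  refine forall₂_congr fun s _ => ?_
  by_cases hσ : σf ∈ s <;> simp [posSteps_zero_iff, hσ]

end Verdict

/-- **Theorem 3 (solvability equivalence of f-Obs and f-Dx).** With
`L' = (L \ K) ∪ { s ++ [σf] | s ∈ K }`, there exist observers solving
`Obs(f, L, K, (Sio i))` iff there exist observers solving `Dx(f, L', (Sio i), σf, 0)`. -/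
theorem obs_solvable_iff_dx_solvable {α : Type*} {n : ℕ} {V : Fin n → Type*}
    (f : (∀ i, V i) → Bool)
    (L K : Set (List α)) (hKL : K ⊆ L)
    (Sio : Fin n → Set α) [∀ i, DecidablePred (· ∈ Sio i)]
    (σf : α) (hσf : ∀ i, σf ∉ Sio i) (hσfL : ∀ s ∈ L, σf ∉ s) :
    (∃ obs : ∀ i, List α → V i, SolvesObs f obs L K Sio) ↔
      (∃ g : ∀ i, List α → V i,
        SolvesDx f g ((L \ K) ∪ catSym K σf) Sio σf 0) := by
  have hproj (i : Fin n) := natProj_append_singleton_of_not_mem (hσf i)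
  refine exists_congr fun obs => ?_
  rw [solvesObs_iff, solvesDx_zero_iff]
  constructor
  · rintro h s (⟨hsL, hsK⟩ | ⟨t, htK, rfl⟩)
    · simp [h s hsL, hsK, hσfL s hsL]
    · simp [hproj, h t (hKL htK), htK]
  · intro h s hsL
    by_cases hsK : s ∈ K
    · simpa [hproj, hsK] using h (s ++ [σf]) (Or.inr ⟨s, hsK, rfl⟩)
    · simp [h s (Or.inl ⟨hsL, hsK⟩), hsK, hσfL s hsL]
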